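/- arXiv:2006.08750 — 5 statements merged into one kernel-verified Lean document; each statement's English description precedes it below -/
import Mathlib

section
/- Let D ∈ ℂ^{N×N} be Hermitian positive definite and let C ∈ ℂ^{N×N} be a nonzero matrix such that ν_D(C) := inf_{0≠x∈ℂ^N} |(Cx,x)_D| / (x,x)_D > 0. Then for every r ∈ ℂ^N there exists a scalar α ∈ ℂ such that ‖r − α C r‖_D² ≤ (1 − ν_D(C)² / ‖C‖_D²) ‖r‖_D². (One-step contraction underlying Elman's GMRES bound.) -/
open Matrix
open scoped ComplexOrder

noncomputable section

/-- The `D`-inner product `(x,y)_D = y* D x` on `ℂ^N`. -/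
def dip {N : ℕ} (D : Matrix (Fin N) (Fin N) ℂ) (x y : Fin N → ℂ) : ℂ :=
  star y ⬝ᵥ (D *ᵥ x)

/-- The norm induced by `D`: `‖x‖_D = ((x,x)_D)^{1/2}`. -/
def dnorm {N : ℕ} (D : Matrix (Fin N) (Fin N) ℂ) (x : Fin N → ℂ) : ℝ :=
  Real.sqrt (dip D x x).re

/-- The operator norm induced by the `D`-norm. -/
def dopNorm {N : ℕ} (D C : Matrix (Fin N) (Fin N) ℂ) : ℝ :=
  ⨆ x : {x : Fin N → ℂ // x ≠ 0}, dnorm D (C *ᵥ x.1) / dnorm D x.1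

/-- `ν_D(C) = inf_{x ≠ 0} |(Cx,x)_D| / (x,x)_D`, the distance of the field of values
from the origin. -/
def dnu {N : ℕ} (D C : Matrix (Fin N) (Fin N) ℂ) : ℝ :=
  ⨅ x : {x : Fin N → ℂ // x ≠ 0},
    ‖dip D (C *ᵥ x.1) x.1‖ / (dip D x.1 x.1).re

/-!
With `t = ⟪s, r⟫` for `s = C r`, subtracting from `r` its `D`-orthogonal projection
`(t / ‖s‖²) s` onto `span {s}` leaves `‖r‖² - |t|² / ‖s‖²`. The field of values bounds
`|t| ≥ ν ‖r‖²` from below and the operator norm bounds `‖s‖ ≤ ‖C‖ ‖r‖` from above, which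
together give `|t|² / ‖s‖² ≥ (ν / ‖C‖)² ‖r‖²`.
-/

open scoped InnerProductSpace

theorem ContinuousLinearMap.norm_apply_le_iSup_norm_div_mul {𝕜 E F : Type*}
    [NontriviallyNormedField 𝕜] [NormedAddCommGroup E] [SeminormedAddCommGroup F]
    [NormedSpace 𝕜 E] [NormedSpace 𝕜 F] (f : E →L[𝕜] F) (x : E) :
    ‖f x‖ ≤ (⨆ y : {y : E // y ≠ 0}, ‖f y.1‖ / ‖y.1‖) * ‖x‖ := by
  rcases eq_or_ne x 0 with rfl | hx
  · simp
  have hbdd : BddAbove (Set.range fun y : {y : E // y ≠ 0} => ‖f y.1‖ / ‖y.1‖) := by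
    refine ⟨‖f‖, Set.forall_mem_range.2 fun y => ?_⟩
    exact div_le_of_le_mul₀ (norm_nonneg _) (norm_nonneg _) (f.le_opNorm y)
  exact (div_le_iff₀ (norm_pos_iff.2 hx)).1 (le_ciSup hbdd ⟨x, hx⟩)

section ProjectionStep

variable {𝕜 E : Type*} [RCLike 𝕜] [SeminormedAddCommGroup E] [InnerProductSpace 𝕜 E]

theorem norm_sub_inner_div_smul_sq (r s : E) :
    ‖r - (⟪s, r⟫_𝕜 / (‖s‖ ^ 2 : 𝕜)) • s‖ ^ 2 = ‖r‖ ^ 2 - ‖⟪s, r⟫_𝕜‖ ^ 2 / ‖s‖ ^ 2 := by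
  have hre : RCLike.re ⟪r, (⟪s, r⟫_𝕜 / (‖s‖ ^ 2 : 𝕜)) • s⟫_𝕜 = ‖⟪s, r⟫_𝕜‖ ^ 2 / ‖s‖ ^ 2 := by
    rw [inner_smul_right, ← inner_conj_symm r s, div_mul_eq_mul_div, RCLike.mul_conj]
    norm_cast
  have hsq : ‖(⟪s, r⟫_𝕜 / (‖s‖ ^ 2 : 𝕜)) • s‖ ^ 2 = ‖⟪s, r⟫_𝕜‖ ^ 2 / ‖s‖ ^ 2 := by
    rcases eq_or_ne ‖s‖ 0 with hs | hs
    · simp [hs]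
    · rw [norm_smul, norm_div, norm_pow, RCLike.norm_ofReal, abs_norm]
      field_simp
  rw [norm_sub_sq (𝕜 := 𝕜), hre, hsq]
  ring

theorem exists_norm_sub_smul_sq_le {ν M : ℝ} {r s : E} (hν : 0 ≤ ν)
    (hνr : ν * ‖r‖ ^ 2 ≤ ‖⟪r, s⟫_𝕜‖) (hsr : ‖s‖ ≤ M * ‖r‖) :
    ∃ α : 𝕜, ‖r - α • s‖ ^ 2 ≤ (1 - ν ^ 2 / M ^ 2) * ‖r‖ ^ 2 := by
  refine ⟨_, (norm_sub_inner_div_smul_sq r s).le.trans ?_⟩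
  rw [norm_inner_symm]
  suffices ν ^ 2 / M ^ 2 * ‖r‖ ^ 2 ≤ ‖⟪r, s⟫_𝕜‖ ^ 2 / ‖s‖ ^ 2 by linarith
  rcases (norm_nonneg s).eq_or_lt with hs | hs
  · -- Cauchy–Schwarz forces `⟪r, s⟫ = 0`, hence `ν * ‖r‖ ^ 2 = 0`.
    have hνr0 : ν * ‖r‖ ^ 2 = 0 :=
      le_antisymm (hνr.trans (by simpa [← hs] using norm_inner_le_norm (𝕜 := 𝕜) r s))
        (by positivity)
    calc ν ^ 2 / M ^ 2 * ‖r‖ ^ 2 = ν * ‖r‖ ^ 2 * ν / M ^ 2 := by ring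
      _ ≤ ‖⟪r, s⟫_𝕜‖ ^ 2 / ‖s‖ ^ 2 := by rw [hνr0, ← hs]; simp
  · have hM : M ≠ 0 := by
      rintro rfl
      linarith [hs.trans_le hsr]
    rw [div_mul_eq_mul_div, div_le_div_iff₀ (by positivity) (by positivity)]
    calc ν ^ 2 * ‖r‖ ^ 2 * ‖s‖ ^ 2 ≤ ν ^ 2 * ‖r‖ ^ 2 * (M * ‖r‖) ^ 2 := by gcongr
      _ = (ν * ‖r‖ ^ 2) ^ 2 * M ^ 2 := by ring
      _ ≤ ‖⟪r, s⟫_𝕜‖ ^ 2 * M ^ 2 := by gcongr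

end ProjectionStep

section DInnerProduct

variable {N : ℕ} {D : Matrix (Fin N) (Fin N) ℂ}

theorem dip_self_re_nonneg (hD : D.PosSemidef) (x : Fin N → ℂ) : 0 ≤ (dip D x x).re :=
  hD.re_dotProduct_nonneg x

theorem dnorm_sq (hD : D.PosSemidef) (x : Fin N → ℂ) : dnorm D x ^ 2 = (dip D x x).re :=
  Real.sq_sqrt (dip_self_re_nonneg hD x)

theorem dnu_nonneg (hD : D.PosSemidef) (C : Matrix (Fin N) (Fin N) ℂ) : 0 ≤ dnu D C :=
  Real.iInf_nonneg fun x => div_nonneg (norm_nonneg _) (dip_self_re_nonneg hD x.1)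

theorem dnu_mul_dip_self_le (hD : D.PosSemidef) (C : Matrix (Fin N) (Fin N) ℂ)
    (x : Fin N → ℂ) : dnu D C * (dip D x x).re ≤ ‖dip D (C *ᵥ x) x‖ := by
  rcases eq_or_ne x 0 with rfl | hx
  · simp [dip]
  rcases (dip_self_re_nonneg hD x).eq_or_lt with hx0 | hx0
  · simp [← hx0]
  have hbdd : BddBelow (Set.range fun x : {x : Fin N → ℂ // x ≠ 0} =>
      ‖dip D (C *ᵥ x.1) x.1‖ / (dip D x.1 x.1).re) :=
    ⟨0, Set.forall_mem_range.2 fun y => div_nonneg (norm_nonneg _) (dip_self_re_nonneg hD y.1)⟩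
  exact (le_div_iff₀ hx0).1 (ciInf_le hbdd ⟨x, hx⟩)

end DInnerProduct

/-- `ℂ^N` as a type synonym carrying the inner product space structure of `(·,·)_D`. -/
def WithDInner {N : ℕ} (D : Matrix (Fin N) (Fin N) ℂ) (_hD : D.PosDef) : Type := Fin N → ℂ

namespace WithDInner

variable {N : ℕ} {D : Matrix (Fin N) (Fin N) ℂ} (hD : D.PosDef)

instance : NormedAddCommGroup (WithDInner D hD) := D.toNormedAddCommGroup hD

instance : InnerProductSpace ℂ (WithDInner D hD) := D.toInnerProductSpace hD.posSemidef

instance : FiniteDimensional ℂ (WithDInner D hD) :=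
  inferInstanceAs (FiniteDimensional ℂ (Fin N → ℂ))

theorem norm_eq_dnorm (x : WithDInner D hD) : ‖x‖ = dnorm D x := by
  simp only [dnorm, dip]
  rw [dotProduct_comm]
  rfl

theorem inner_eq_dip (x y : WithDInner D hD) : ⟪x, y⟫_ℂ = dip D y x := by
  simp only [dip]
  rw [dotProduct_comm]
  rfl

end WithDInner

theorem dnorm_mulVec_le {N : ℕ} {D : Matrix (Fin N) (Fin N) ℂ} (hD : D.PosDef)
    (C : Matrix (Fin N) (Fin N) ℂ) (x : Fin N → ℂ) :
    dnorm D (C *ᵥ x) ≤ dopNorm D C * dnorm D x := by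
  let L : WithDInner D hD →L[ℂ] WithDInner D hD := LinearMap.toContinuousLinearMap C.mulVecLin
  let y : WithDInner D hD := x
  calc dnorm D (C *ᵥ x) = ‖L y‖ := (WithDInner.norm_eq_dnorm hD (L y)).symm
    _ ≤ (⨆ z : {z : WithDInner D hD // z ≠ 0}, ‖L z‖ / ‖z.1‖) * ‖y‖ :=
      L.norm_apply_le_iSup_norm_div_mul y
    _ = dopNorm D C * dnorm D x := by
      simp only [WithDInner.norm_eq_dnorm]
      rfl

theorem stmt_1_general (N : ℕ) (D C : Matrix (Fin N) (Fin N) ℂ) (hD : D.PosDef)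
    (r : Fin N → ℂ) :
    ∃ α : ℂ, (dnorm D (r - α • (C *ᵥ r))) ^ 2
      ≤ (1 - (dnu D C) ^ 2 / (dopNorm D C) ^ 2) * (dnorm D r) ^ 2 := by
  let x : WithDInner D hD := r
  let s : WithDInner D hD := C *ᵥ r
  have hν : dnu D C * ‖x‖ ^ 2 ≤ ‖⟪x, s⟫_ℂ‖ := by
    rw [WithDInner.inner_eq_dip, WithDInner.norm_eq_dnorm, dnorm_sq hD.posSemidef]
    exact dnu_mul_dip_self_le hD.posSemidef C r
  have hM : ‖s‖ ≤ dopNorm D C * ‖x‖ := by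
    rw [WithDInner.norm_eq_dnorm, WithDInner.norm_eq_dnorm]
    exact dnorm_mulVec_le hD C r
  obtain ⟨α, hα⟩ := exists_norm_sub_smul_sq_le (dnu_nonneg hD.posSemidef C) hν hM
  rw [WithDInner.norm_eq_dnorm, WithDInner.norm_eq_dnorm] at hα
  exact ⟨α, hα⟩

/-- one-step contraction underlying Elman's GMRES bound. -/
theorem stmt_1 (N : ℕ) (D C : Matrix (Fin N) (Fin N) ℂ) (hD : D.PosDef)
    (hC : C ≠ 0) (hν : 0 < dnu D C) (r : Fin N → ℂ) :
    ∃ α : ℂ, (dnorm D (r - α • (C *ᵥ r))) ^ 2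
      ≤ (1 - (dnu D C) ^ 2 / (dopNorm D C) ^ 2) * (dnorm D r) ^ 2 :=
  stmt_1_general N D C hD r

end
end

section
/- Let n > m ≥ 1, let A, M ∈ ℂ^{n×n}, let ε ∈ ℝ, and set A_ε = A − iεM. Let P ∈ ℂ^{n×m} and set A_H = P*AP. Assume A_ε and A_H are invertible, and define the two-level preconditioner B_ε = A_ε⁻¹(I − A P A_H⁻¹ P*) + P A_H⁻¹ P*. Then A B_ε = I + iε M A_ε⁻¹ (I − A P A_H⁻¹ P*). In particular, the spectrum and field of values of A B_ε are those of a perturbation of the identity of size ε. -/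
/-!
Writing `A = A_ε + iεM` gives `A A_ε⁻¹ = I + iεM A_ε⁻¹`; after multiplying out `A B_ε`, the
coarse-grid terms `± A P A_H⁻¹ P*` cancel.
-/

open Matrix

namespace Matrix

variable {ι R : Type*} [Fintype ι] [DecidableEq ι] [CommRing R]

theorem mul_inv_sub_smul (A M : Matrix ι ι R) (c : R) (h : IsUnit (A - c • M)) :
    A * (A - c • M)⁻¹ = 1 + c • (M * (A - c • M)⁻¹) := by
  have hinv : (A - c • M) * (A - c • M)⁻¹ = 1 :=
    mul_nonsing_inv _ ((isUnit_iff_isUnit_det _).mp h)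
  calc A * (A - c • M)⁻¹ = (A - c • M + c • M) * (A - c • M)⁻¹ := by rw [sub_add_cancel]
    _ = 1 + c • (M * (A - c • M)⁻¹) := by rw [add_mul, hinv, smul_mul_assoc]

/-- `C` plays the role of the coarse-grid correction `P A_H⁻¹ P*`. -/
theorem mul_shifted_deflation (A M C : Matrix ι ι R) (c : R) (h : IsUnit (A - c • M)) :
    A * ((A - c • M)⁻¹ * (1 - A * C) + C) = 1 + c • (M * (A - c • M)⁻¹ * (1 - A * C)) := by
  rw [mul_add, ← Matrix.mul_assoc, mul_inv_sub_smul A M c h, add_mul, one_mul, smul_mul_assoc]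
  abel

end Matrix

theorem stmt_7_general (n m : ℕ)
    (A M : Matrix (Fin n) (Fin n) ℂ) (ε : ℝ)
    (P : Matrix (Fin n) (Fin m) ℂ)
    (hAeps : IsUnit (A - (Complex.I * (ε : ℂ)) • M)) :
    let Aeps : Matrix (Fin n) (Fin n) ℂ := A - (Complex.I * (ε : ℂ)) • M
    let AH : Matrix (Fin m) (Fin m) ℂ := Pᴴ * A * P
    let Beps : Matrix (Fin n) (Fin n) ℂ :=
      Aeps⁻¹ * (1 - A * P * AH⁻¹ * Pᴴ) + P * AH⁻¹ * Pᴴ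
    A * Beps = 1 + (Complex.I * (ε : ℂ)) • (M * Aeps⁻¹ * (1 - A * P * AH⁻¹ * Pᴴ)) := by
  intro Aeps AH Beps
  simpa only [Beps, Aeps, Matrix.mul_assoc] using
    mul_shifted_deflation A M (P * AH⁻¹ * Pᴴ) (Complex.I * (ε : ℂ)) hAeps

/-- With `A_ε = A − iεM`, `A_H = P*AP`, and the two-level preconditioner
`B_ε = A_ε⁻¹(I − A P A_H⁻¹ P*) + P A_H⁻¹ P*`, one has
`A B_ε = I + iε M A_ε⁻¹ (I − A P A_H⁻¹ P*)`. -/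
theorem stmt_7 (n m : ℕ) (hm : 1 ≤ m) (hnm : m < n)
    (A M : Matrix (Fin n) (Fin n) ℂ) (ε : ℝ)
    (P : Matrix (Fin n) (Fin m) ℂ)
    (hAeps : IsUnit (A - (Complex.I * (ε : ℂ)) • M))
    (hAH : IsUnit (Pᴴ * A * P)) :
    let Aeps : Matrix (Fin n) (Fin n) ℂ := A - (Complex.I * (ε : ℂ)) • M
    let AH : Matrix (Fin m) (Fin m) ℂ := Pᴴ * A * P
    let Beps : Matrix (Fin n) (Fin n) ℂ :=
      Aeps⁻¹ * (1 - A * P * AH⁻¹ * Pᴴ) + P * AH⁻¹ * Pᴴ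
    A * Beps = 1 + (Complex.I * (ε : ℂ)) • (M * Aeps⁻¹ * (1 - A * P * AH⁻¹ * Pᴴ)) :=
  stmt_7_general n m A M ε P hAeps
end

section
/- Let n > m ≥ 1, let A, A_ε ∈ ℂ^{n×n} with A_ε invertible, and let P ∈ ℂ^{n×m} be injective with A_H = P*AP invertible. Define B_ε = A_ε⁻¹(I − A P A_H⁻¹ P*) + P A_H⁻¹ P*. Then B_ε is invertible if and only if the matrix P*A_εP ∈ ℂ^{m×m} is invertible. -/
/-!
Factoring out `A_ε⁻¹` gives `B_ε = A_ε⁻¹ (I + C D)` with `C = (A_ε - A) P` and `D = A_H⁻¹ P*`.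
By Sylvester's determinant identity `I + C D` is invertible exactly when `I + D C` is, and
`I + D C = A_H⁻¹ (P* A_ε P)` because `P* A P = A_H`.
-/

open Matrix

namespace Matrix

variable {ι κ R : Type*} [Fintype ι] [Fintype κ] [DecidableEq κ] [CommRing R]

theorem one_add_coarse_mul_eq {A E : Matrix ι ι R} (P : Matrix ι κ R) (Q : Matrix κ ι R)
    (hAH : IsUnit (Q * A * P)) :
    1 + (Q * A * P)⁻¹ * Q * ((E - A) * P) = (Q * A * P)⁻¹ * (Q * E * P) := by
  have hAH' : (Q * A * P)⁻¹ * (Q * A * P) = 1 :=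
    nonsing_inv_mul _ ((isUnit_iff_isUnit_det _).mp hAH)
  simp only [Matrix.mul_sub, Matrix.sub_mul, ← Matrix.mul_assoc] at hAH' ⊢
  rw [hAH']
  abel

variable [DecidableEq ι]

theorem isUnit_one_add_mul_comm (C : Matrix ι κ R) (D : Matrix κ ι R) :
    IsUnit (1 + C * D) ↔ IsUnit (1 + D * C) := by
  rw [isUnit_iff_isUnit_det, isUnit_iff_isUnit_det, det_one_add_mul_comm]

section TwoLevel

variable (A E : Matrix ι ι R) (P : Matrix ι κ R) (Q : Matrix κ ι R)

/-- The restriction `Q` generalizes `P*`, so `Q A P` is the coarse matrix `A_H`. -/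
noncomputable def twoLevelPrecond : Matrix ι ι R :=
  E⁻¹ * (1 - A * P * (Q * A * P)⁻¹ * Q) + P * (Q * A * P)⁻¹ * Q

variable {A E}

theorem twoLevelPrecond_eq_inv_mul (hE : IsUnit E) :
    twoLevelPrecond A E P Q = E⁻¹ * (1 + (E - A) * P * ((Q * A * P)⁻¹ * Q)) := by
  have hEE : E⁻¹ * E = 1 := nonsing_inv_mul E ((isUnit_iff_isUnit_det E).mp hE)
  simp only [twoLevelPrecond, Matrix.mul_add, Matrix.mul_sub, Matrix.sub_mul, Matrix.mul_one,
    ← Matrix.mul_assoc, hEE, Matrix.one_mul]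
  abel

theorem isUnit_twoLevelPrecond_iff (hE : IsUnit E) (hAH : IsUnit (Q * A * P)) :
    IsUnit (twoLevelPrecond A E P Q) ↔ IsUnit (Q * E * P) := by
  rw [twoLevelPrecond_eq_inv_mul P Q hE, (isUnit_nonsing_inv_iff.mpr hE).mul_left_iff,
    isUnit_one_add_mul_comm, one_add_coarse_mul_eq P Q hAH,
    (isUnit_nonsing_inv_iff.mpr hAH).mul_left_iff]

end TwoLevel

end Matrix

theorem stmt_9_general (n m : ℕ)
    (A Aeps : Matrix (Fin n) (Fin n) ℂ) (hAeps : IsUnit Aeps)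
    (P : Matrix (Fin n) (Fin m) ℂ)
    (hAH : IsUnit (Pᴴ * A * P)) :
    let AH : Matrix (Fin m) (Fin m) ℂ := Pᴴ * A * P
    let Beps : Matrix (Fin n) (Fin n) ℂ :=
      Aeps⁻¹ * (1 - A * P * AH⁻¹ * Pᴴ) + P * AH⁻¹ * Pᴴ
    IsUnit Beps ↔ IsUnit (Pᴴ * Aeps * P) :=
  isUnit_twoLevelPrecond_iff P Pᴴ hAeps hAH

/-- The two-level preconditioner
`B_ε = A_ε⁻¹(I − A P A_H⁻¹ P*) + P A_H⁻¹ P*` is invertible if and only if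
`P* A_ε P` is invertible. -/
theorem stmt_9 (n m : ℕ) (hm : 1 ≤ m) (hnm : m < n)
    (A Aeps : Matrix (Fin n) (Fin n) ℂ) (hAeps : IsUnit Aeps)
    (P : Matrix (Fin n) (Fin m) ℂ) (hP : Function.Injective P.mulVec)
    (hAH : IsUnit (Pᴴ * A * P)) :
    let AH : Matrix (Fin m) (Fin m) ℂ := Pᴴ * A * P
    let Beps : Matrix (Fin n) (Fin n) ℂ :=
      Aeps⁻¹ * (1 - A * P * AH⁻¹ * Pᴴ) + P * AH⁻¹ * Pᴴ
    IsUnit Beps ↔ IsUnit (Pᴴ * Aeps * P) :=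
  stmt_9_general n m A Aeps hAeps P hAH
end

section
/- Let S, N ∈ ℂ^{n×n} be Hermitian positive semidefinite, let M ∈ ℂ^{n×n} be Hermitian positive definite, let k > 0 and let ε be real with 0 < ε ≤ k². Set A_ε = S − (k² + iε)M − ikN (the discrete shifted Laplacian with stiffness matrix S, mass matrix M and boundary mass matrix N). Then for every u ∈ ℂ^n: |u* A_ε u| ≥ (ε/(3k²)) (u* S u + k² u* M u). (Discrete coercivity of the shifted sesquilinear form: |a_ε(u,u)| ≥ α (ε/k²) ‖u‖²_{1,k} with α = 1/3, where ‖u‖²_{1,k} corresponds to u*Su + k² u*Mu.) -/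
open Matrix
open scoped ComplexOrder

/-!
For Hermitian positive semidefinite `S, M, N` the numbers `s = u*Su`, `m = u*Mu`, `p = u*Nu` are
real and nonnegative, so `u*A_εu` has real part `s - k²m` and imaginary part `-(εm + kp)`.
If `s ≤ 2k²m`, the imaginary part alone gives `εm ≥ (ε/3k²)(s + k²m)`; otherwise
`s - k²m ≥ (s + k²m)/3`, which dominates since `ε ≤ k²`.
-/

lemma le_max_abs_sub_mul {s m q K ε : ℝ} (hs : 0 ≤ s) (hq : 0 ≤ q)
    (hK : 0 < K) (hε : 0 ≤ ε) (hεK : ε ≤ K) :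
    ε / (3 * K) * (s + K * m) ≤ max |s - K * m| (ε * m + q) := by
  rw [div_mul_eq_mul_div, div_le_iff₀ (by positivity)]
  rcases le_or_gt s (2 * K * m) with hsm | hsm
  · have : ε * (s + K * m) ≤ (ε * m + q) * (3 * K) := by nlinarith [mul_nonneg hε hq]
    nlinarith [le_max_right |s - K * m| (ε * m + q)]
  · have : ε * (s + K * m) ≤ |s - K * m| * (3 * K) := by
      rw [abs_of_pos (by nlinarith)]; nlinarith
    nlinarith [le_max_left |s - K * m| (ε * m + q)]

lemma le_norm_sub_shift_mul_sub {s m p : ℂ} (hs : 0 ≤ s) (hm : 0 ≤ m) (hp : 0 ≤ p)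
    {K ε c : ℝ} (hK : 0 < K) (hε : 0 ≤ ε) (hεK : ε ≤ K) (hc : 0 ≤ c) :
    ε / (3 * K) * (s.re + K * m.re) ≤ ‖s - (K + Complex.I * ε) * m - Complex.I * c * p‖ := by
  obtain ⟨hs_re, hs_im⟩ := Complex.nonneg_iff.1 hs
  obtain ⟨hm_re, hm_im⟩ := Complex.nonneg_iff.1 hm
  obtain ⟨hp_re, hp_im⟩ := Complex.nonneg_iff.1 hp
  set z := s - (K + Complex.I * ε) * m - Complex.I * c * p
  have hre : z.re = s.re - K * m.re := by simp [z, ← hm_im, ← hp_im]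
  have him : z.im = -(ε * m.re + c * p.re) := by
    simp [z, ← hs_im, ← hm_im, ← hp_im]; ring
  calc ε / (3 * K) * (s.re + K * m.re) ≤ max |z.re| |z.im| := by
        rw [hre, him, abs_neg, abs_of_nonneg (a := ε * m.re + c * p.re) (by positivity)]
        exact le_max_abs_sub_mul hs_re (mul_nonneg hc hp_re) hK hε hεK
    _ ≤ ‖z‖ := max_le z.abs_re_le_norm z.abs_im_le_norm

/-- discrete coercivity of the shifted sesquilinear form. With `S, N`
Hermitian positive semidefinite, `M` Hermitian positive definite, `k > 0`,
`0 < ε ≤ k²` and `A_ε = S − (k² + iε)M − ikN`, for every `u`: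
`|u* A_ε u| ≥ (ε/(3k²)) (u* S u + k² u* M u)`. -/
theorem stmt_10 (n : ℕ) (S N M : Matrix (Fin n) (Fin n) ℂ)
    (hS : S.PosSemidef) (hN : N.PosSemidef) (hM : M.PosDef)
    (k ε : ℝ) (hk : 0 < k) (hε : 0 < ε) (hεk : ε ≤ k ^ 2) :
    let Aeps : Matrix (Fin n) (Fin n) ℂ :=
      S - (((k : ℂ) ^ 2 + Complex.I * (ε : ℂ)) • M) - ((Complex.I * (k : ℂ)) • N)
    ∀ u : Fin n → ℂ,
      (ε / (3 * k ^ 2)) * ((star u ⬝ᵥ (S *ᵥ u)).re + k ^ 2 * (star u ⬝ᵥ (M *ᵥ u)).re)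
        ≤ ‖star u ⬝ᵥ (Aeps *ᵥ u)‖ := by
  intro Aeps u
  have hform : star u ⬝ᵥ (Aeps *ᵥ u) = star u ⬝ᵥ (S *ᵥ u)
      - (((k ^ 2 : ℝ) : ℂ) + Complex.I * ε) * star u ⬝ᵥ (M *ᵥ u)
      - Complex.I * k * star u ⬝ᵥ (N *ᵥ u) := by
    simp only [Aeps, sub_mulVec, smul_mulVec, dotProduct_sub, dotProduct_smul, smul_eq_mul]
    push_cast; ring
  rw [hform]
  exact le_norm_sub_shift_mul_sub (hS.dotProduct_mulVec_nonneg u)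
    (hM.posSemidef.dotProduct_mulVec_nonneg u) (hN.dotProduct_mulVec_nonneg u)
    (by positivity) hε.le hεk hk.le
end

section
/- Let n > m ≥ 1, let A, M ∈ ℂ^{n×n} with M Hermitian positive definite, let ε ∈ ℝ, set A_ε = A − iεM, let P ∈ ℂ^{n×m} with A_H = P*AP invertible, and assume A_ε is invertible. Define B_ε = A_ε⁻¹(I − A P A_H⁻¹ P*) + P A_H⁻¹ P* and Ĵ = M A_ε⁻¹ (I − A P A_H⁻¹ P*). Then for every nonzero g ∈ ℂ^n, | (A B_ε g, g)_{M⁻¹} / (g,g)_{M⁻¹} − 1 | ≤ |ε| ‖Ĵ‖_{M⁻¹}; that is, the field of values of A B_ε in the M⁻¹-inner product is contained in the closed disk centered at 1 of radius |ε| ‖Ĵ‖_{M⁻¹}. -/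
/-!
Writing `A = A_ε + iεM` gives `A B_ε = I + iε Ĵ`, so the quantity to bound is
`iε (Ĵ g, g)_{M⁻¹} / (g, g)_{M⁻¹}`, and Cauchy–Schwarz in the `M⁻¹`-inner product bounds
`|(Ĵ g, g)_{M⁻¹}|` by `‖Ĵ‖_{M⁻¹} (g, g)_{M⁻¹}`. That the supremum defining `‖Ĵ‖_{M⁻¹}` is finite
comes from factoring a positive definite `D` as `Bᴴ B` with `B` invertible: `‖x‖_D` is then the
Euclidean norm of `B x`, and `‖C‖_D` is at most the spectral norm of `B C B⁻¹`.
-/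

open Matrix
open scoped ComplexOrder

noncomputable section

section InnerProduct

open WithLp
open scoped MatrixOrder Matrix.Norms.L2Operator

variable {N : ℕ}

lemma dip_conjTranspose_mul_self (B : Matrix (Fin N) (Fin N) ℂ) (x y : Fin N → ℂ) :
    dip (Bᴴ * B) x y = inner ℂ (toLp 2 (B *ᵥ y)) (toLp 2 (B *ᵥ x)) := by
  rw [EuclideanSpace.inner_toLp_toLp, dotProduct_comm, dip, ← mulVec_mulVec, dotProduct_mulVec,
    star_mulVec]

lemma dnorm_conjTranspose_mul_self (B : Matrix (Fin N) (Fin N) ℂ) (x : Fin N → ℂ) :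
    dnorm (Bᴴ * B) x = ‖toLp 2 (B *ᵥ x)‖ := by
  rw [dnorm, dip_conjTranspose_mul_self, ← RCLike.re_to_complex, inner_self_eq_norm_sq,
    Real.sqrt_sq (norm_nonneg _)]

variable {D : Matrix (Fin N) (Fin N) ℂ}

lemma norm_dip_le (hD : D.PosSemidef) (x y : Fin N → ℂ) :
    ‖dip D x y‖ ≤ dnorm D x * dnorm D y := by
  obtain ⟨B, rfl⟩ := CStarAlgebra.nonneg_iff_eq_star_mul_self.mp hD.nonneg
  rw [star_eq_conjTranspose, dip_conjTranspose_mul_self, dnorm_conjTranspose_mul_self,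
    dnorm_conjTranspose_mul_self, mul_comm]
  exact norm_inner_le_norm _ _

lemma dip_self_eq_dnorm_sq (hD : D.PosSemidef) (x : Fin N → ℂ) :
    dip D x x = ((dnorm D x ^ 2 : ℝ) : ℂ) := by
  obtain ⟨B, rfl⟩ := CStarAlgebra.nonneg_iff_eq_star_mul_self.mp hD.nonneg
  rw [star_eq_conjTranspose, dip_conjTranspose_mul_self, dnorm_conjTranspose_mul_self,
    inner_self_eq_norm_sq_to_K]
  push_cast
  rfl

lemma dnorm_pos (hD : D.PosDef) {x : Fin N → ℂ} (hx : x ≠ 0) : 0 < dnorm D x :=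
  Real.sqrt_pos.2 (hD.re_dotProduct_pos hx)

lemma dnorm_conjTranspose_mul_self_mulVec_le {B : Matrix (Fin N) (Fin N) ℂ} (hB : IsUnit B)
    (C : Matrix (Fin N) (Fin N) ℂ) (x : Fin N → ℂ) :
    dnorm (Bᴴ * B) (C *ᵥ x)
      ≤ ‖toEuclideanCLM (𝕜 := ℂ) (B * C * B⁻¹)‖ * dnorm (Bᴴ * B) x := by
  have hBx : B *ᵥ (C *ᵥ x) = (B * C * B⁻¹) *ᵥ (B *ᵥ x) := by
    rw [mulVec_mulVec, mulVec_mulVec, Matrix.mul_assoc (B * C),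
      nonsing_inv_mul _ ((isUnit_iff_isUnit_det B).mp hB), Matrix.mul_one]
  rw [dnorm_conjTranspose_mul_self, dnorm_conjTranspose_mul_self, hBx, ← toEuclideanCLM_toLp]
  exact ContinuousLinearMap.le_opNorm _ _

lemma dnorm_mulVec_le_dopNorm (hD : D.PosDef) (C : Matrix (Fin N) (Fin N) ℂ) (x : Fin N → ℂ) :
    dnorm D (C *ᵥ x) ≤ dopNorm D C * dnorm D x := by
  rcases eq_or_ne x 0 with rfl | hx
  · simp [dnorm, dip]
  obtain ⟨B, hB, rfl⟩ :=
    CStarAlgebra.isStrictlyPositive_iff_eq_star_mul_self.mp hD.isStrictlyPositive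
  rw [star_eq_conjTranspose] at hD ⊢
  have hbdd : BddAbove (Set.range fun y : {y : Fin N → ℂ // y ≠ 0} =>
      dnorm (Bᴴ * B) (C *ᵥ y.1) / dnorm (Bᴴ * B) y.1) := by
    refine ⟨‖toEuclideanCLM (𝕜 := ℂ) (B * C * B⁻¹)‖, ?_⟩
    rintro _ ⟨y, rfl⟩
    exact div_le_of_le_mul₀ (Real.sqrt_nonneg _) (norm_nonneg _)
      (dnorm_conjTranspose_mul_self_mulVec_le hB C y)
  rw [← div_le_iff₀ (dnorm_pos hD hx)]
  exact le_ciSup hbdd ⟨x, hx⟩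

lemma norm_dip_mulVec_div_dip_self_le (hD : D.PosDef) (C : Matrix (Fin N) (Fin N) ℂ)
    {x : Fin N → ℂ} (hx : x ≠ 0) : ‖dip D (C *ᵥ x) x / dip D x x‖ ≤ dopNorm D C := by
  have hpos := dnorm_pos hD hx
  rw [norm_div, dip_self_eq_dnorm_sq hD.posSemidef, Complex.norm_real,
    Real.norm_of_nonneg (by positivity), div_le_iff₀ (by positivity)]
  calc ‖dip D (C *ᵥ x) x‖ ≤ dnorm D (C *ᵥ x) * dnorm D x := norm_dip_le hD.posSemidef _ _
    _ ≤ dopNorm D C * dnorm D x * dnorm D x := by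
        gcongr
        exact dnorm_mulVec_le_dopNorm hD C x
    _ = dopNorm D C * dnorm D x ^ 2 := by ring

end InnerProduct

lemma dip_one_add_smul_mulVec_div_sub_one {N : ℕ} {D : Matrix (Fin N) (Fin N) ℂ}
    (C : Matrix (Fin N) (Fin N) ℂ) (c : ℂ) {x : Fin N → ℂ} (hx : dip D x x ≠ 0) :
    dip D ((1 + c • C) *ᵥ x) x / dip D x x - 1 = c * (dip D (C *ᵥ x) x / dip D x x) := by
  have hlin : dip D ((1 + c • C) *ᵥ x) x = dip D x x + c * dip D (C *ᵥ x) x := by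
    simp only [dip, add_mulVec, one_mulVec, smul_mulVec, mulVec_add, mulVec_smul,
      dotProduct_add, dotProduct_smul, smul_eq_mul]
  rw [hlin, add_div, div_self hx, add_sub_cancel_left, mul_div_assoc]

lemma mul_shifted_deflation_eq {n m R : Type*} [Fintype n] [DecidableEq n] [Fintype m]
    [CommRing R] {A M : Matrix n n R} {c : R} (hA : IsUnit (A - c • M)) (P : Matrix n m R)
    (S : Matrix m m R) (Q : Matrix m n R) :
    A * ((A - c • M)⁻¹ * (1 - A * P * S * Q) + P * S * Q)
      = 1 + c • (M * (A - c • M)⁻¹ * (1 - A * P * S * Q)) := by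
  have hAA : A * (A - c • M)⁻¹ = 1 + c • (M * (A - c • M)⁻¹) := by
    nth_rw 1 [← sub_add_cancel A (c • M)]
    rw [Matrix.add_mul, mul_nonsing_inv _ ((isUnit_iff_isUnit_det _).mp hA), Matrix.smul_mul]
  rw [Matrix.mul_add, ← Matrix.mul_assoc, hAA, Matrix.add_mul, Matrix.one_mul, Matrix.smul_mul]
  simp only [Matrix.mul_assoc]
  abel

theorem stmt_13_general (n m : ℕ)
    (A M : Matrix (Fin n) (Fin n) ℂ) (hM : M.PosDef) (ε : ℝ)
    (P : Matrix (Fin n) (Fin m) ℂ)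
    (hAeps : IsUnit (A - (Complex.I * (ε : ℂ)) • M)) :
    let Aeps : Matrix (Fin n) (Fin n) ℂ := A - (Complex.I * (ε : ℂ)) • M
    let AH : Matrix (Fin m) (Fin m) ℂ := Pᴴ * A * P
    let Beps : Matrix (Fin n) (Fin n) ℂ :=
      Aeps⁻¹ * (1 - A * P * AH⁻¹ * Pᴴ) + P * AH⁻¹ * Pᴴ
    let Jhat : Matrix (Fin n) (Fin n) ℂ := M * Aeps⁻¹ * (1 - A * P * AH⁻¹ * Pᴴ)
    ∀ g : Fin n → ℂ, g ≠ 0 →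
      ‖dip M⁻¹ ((A * Beps) *ᵥ g) g / dip M⁻¹ g g - 1‖
        ≤ |ε| * dopNorm M⁻¹ Jhat := by
  intro Aeps AH Beps Jhat g hg
  have hD : M⁻¹.PosDef := hM.inv
  have hgg : dip M⁻¹ g g ≠ 0 := by
    rw [dip_self_eq_dnorm_sq hD.posSemidef]
    exact_mod_cast (pow_pos (dnorm_pos hD hg) 2).ne'
  rw [mul_shifted_deflation_eq hAeps, dip_one_add_smul_mulVec_div_sub_one _ _ hgg, norm_mul]
  simp only [Complex.norm_mul, Complex.norm_I, Complex.norm_real, one_mul, Real.norm_eq_abs]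
  gcongr
  exact norm_dip_mulVec_div_dip_self_le hD Jhat hg

/-- the field of values of `A B_ε` in the `M⁻¹`-inner product is
contained in the closed disk centered at `1` of radius `|ε| ‖Ĵ‖_{M⁻¹}`, where
`Ĵ = M A_ε⁻¹ (I − A P A_H⁻¹ P*)`. -/
theorem stmt_13 (n m : ℕ) (hm : 1 ≤ m) (hnm : m < n)
    (A M : Matrix (Fin n) (Fin n) ℂ) (hM : M.PosDef) (ε : ℝ)
    (P : Matrix (Fin n) (Fin m) ℂ)
    (hAH : IsUnit (Pᴴ * A * P))
    (hAeps : IsUnit (A - (Complex.I * (ε : ℂ)) • M)) :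
    let Aeps : Matrix (Fin n) (Fin n) ℂ := A - (Complex.I * (ε : ℂ)) • M
    let AH : Matrix (Fin m) (Fin m) ℂ := Pᴴ * A * P
    let Beps : Matrix (Fin n) (Fin n) ℂ :=
      Aeps⁻¹ * (1 - A * P * AH⁻¹ * Pᴴ) + P * AH⁻¹ * Pᴴ
    let Jhat : Matrix (Fin n) (Fin n) ℂ := M * Aeps⁻¹ * (1 - A * P * AH⁻¹ * Pᴴ)
    ∀ g : Fin n → ℂ, g ≠ 0 →
      ‖dip M⁻¹ ((A * Beps) *ᵥ g) g / dip M⁻¹ g g - 1‖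
        ≤ |ε| * dopNorm M⁻¹ Jhat :=
  stmt_13_general n m A M hM ε P hAeps

end
end
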